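/- For each n ≥ 1, every finite partition of the unit n-cube [0,1]^n into basic dyadic blocks admits a grid refinement: there exist dyadic partitions P_1, ..., P_n of [0,1] such that every block of the original partition is a union of product blocks K_1 × ⋯ × K_n with K_i ∈ P_i. Moreover, if the original partition has N blocks, the grid refinement can be chosen with at most N^n blocks. -/

import Mathlib

/-- The basic dyadic interval `[(i-1)/2^k, i/2^k]`. -/
def dIcc (k i : ℕ) : Set ℝ := Set.Icc ((i - 1 : ℝ) / 2 ^ k) ((i : ℝ) / 2 ^ k)

/-- A basic dyadic interval. -/
def IsDyadicInterval (I : Set ℝ) : Prop :=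
  ∃ k i : ℕ, 1 ≤ i ∧ i ≤ 2 ^ k ∧ I = dIcc k i

/-- A partition of `[0,1]` into basic dyadic intervals. -/
def DyadicPartition (P : Finset (Set ℝ)) : Prop :=
  (∀ I ∈ P, IsDyadicInterval I) ∧
  (∀ I ∈ P, ∀ J ∈ P, I ≠ J → interior I ∩ interior J = ∅) ∧
  ⋃₀ (P : Set (Set ℝ)) = Set.Icc (0 : ℝ) 1

/-- A basic dyadic block in `ℝⁿ`: a product of `n` basic dyadic intervals. -/
def IsDyadicBlock {n : ℕ} (B : Set (Fin n → ℝ)) : Prop :=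
  ∃ K : Fin n → Set ℝ, (∀ i, IsDyadicInterval (K i)) ∧ B = Set.univ.pi K

lemma dIcc_lt' {k i : ℕ} : ((i : ℝ) - 1) / 2 ^ k < (i : ℝ) / 2 ^ k := by
  have h : (0:ℝ) < 2 ^ k := by positivity
  rw [div_lt_div_iff₀ h h]
  nlinarith

lemma dIcc_subset_unit {k i : ℕ} (hi : 1 ≤ i) (h2 : i ≤ 2 ^ k) : dIcc k i ⊆ Set.Icc 0 1 := by
  have h : (0:ℝ) < 2 ^ k := by positivity
  apply Set.Icc_subset_Icc
  · rw [le_div_iff₀ h]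
    have : (1:ℝ) ≤ (i:ℝ) := by exact_mod_cast hi
    linarith
  · rw [div_le_one h]
    exact_mod_cast h2

lemma IsDyadicInterval.subset_unit {I : Set ℝ} (h : IsDyadicInterval I) : I ⊆ Set.Icc 0 1 := by
  obtain ⟨k, i, h1, h2, rfl⟩ := h; exact dIcc_subset_unit h1 h2

lemma IsDyadicInterval.isClosed {I : Set ℝ} (h : IsDyadicInterval I) : IsClosed I := by
  obtain ⟨k, i, h1, h2, rfl⟩ := h; exact isClosed_Icc

lemma interior_dIcc {k i : ℕ} : interior (dIcc k i) = Set.Ioo (((i:ℝ) - 1)/2^k) ((i:ℝ)/2^k) := by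
  rw [dIcc, interior_Icc]

lemma irrational_ne_div {x : ℝ} (hx : Irrational x) (a : ℤ) (k : ℕ) : x ≠ (a : ℝ) / 2 ^ k := by
  intro h
  exact hx ⟨(a : ℚ) / 2 ^ k, by push_cast; rw [← h]⟩

lemma mem_interior_of_irrational {I : Set ℝ} (h : IsDyadicInterval I) {x : ℝ}
    (hx : Irrational x) (hxI : x ∈ I) : x ∈ interior I := by
  obtain ⟨k, i, h1, h2, rfl⟩ := h
  rw [interior_dIcc]
  obtain ⟨hl, hr⟩ := hxI
  constructor
  · rcases lt_or_eq_of_le hl with h | h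
    · exact h
    · exfalso
      apply irrational_ne_div hx ((i:ℤ) - 1) k
      rw [← h]; push_cast; ring
  · rcases lt_or_eq_of_le hr with h | h
    · exact h
    · exfalso; exact irrational_ne_div hx i k (by rw [h]; push_cast; ring)

lemma exists_irrational_mem_interior {I : Set ℝ} (h : IsDyadicInterval I) :
    ∃ y : ℝ, Irrational y ∧ y ∈ interior I := by
  obtain ⟨k, i, h1, h2, rfl⟩ := h
  rw [interior_dIcc]
  have hlt := dIcc_lt' (k := k) (i := i)
  obtain ⟨y, hy1, hy2⟩ := dense_irrational.inter_open_nonempty _ isOpen_Ioo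
    (Set.nonempty_Ioo.mpr hlt)
  exact ⟨y, hy2, hy1⟩

lemma dIcc_subset_of_le {k l i j : ℕ} (hi : 1 ≤ i) (hj : 1 ≤ j) (hkl : k ≤ l)
    {x : ℝ} (hxi : x ∈ interior (dIcc k i)) (hxj : x ∈ interior (dIcc l j)) :
    dIcc l j ⊆ dIcc k i := by
  rw [interior_dIcc] at hxi hxj
  obtain ⟨hi1, hi2⟩ := hxi
  obtain ⟨hj1, hj2⟩ := hxj
  have h2k : (0:ℝ) < 2 ^ k := by positivity
  obtain ⟨m, rfl⟩ := Nat.exists_eq_add_of_le hkl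
  have h2l : (0:ℝ) < 2 ^ (k + m) := by positivity
  have h2m : (0:ℝ) < 2 ^ m := by positivity
  have hpow : (2:ℝ) ^ (k + m) = 2 ^ k * 2 ^ m := by rw [pow_add]
  have key1 : (i - 1) * 2 ^ m < j := by
    have h0 : ((i:ℝ) - 1) / 2 ^ k < (j:ℝ) / 2 ^ (k + m) := lt_trans hi1 hj2
    rw [div_lt_div_iff₀ h2k h2l] at h0
    have h' : ((i:ℝ) - 1) * 2 ^ m < (j : ℝ) := by nlinarith
    have hcast : (((i - 1) * 2 ^ m : ℕ) : ℝ) < (j:ℝ) := by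
      push_cast [Nat.cast_sub hi]; exact h'
    exact_mod_cast hcast
  have key2 : j ≤ i * 2 ^ m := by
    have h0 : ((j:ℝ) - 1) / 2 ^ (k + m) < (i:ℝ) / 2 ^ k := lt_trans hj1 hi2
    rw [div_lt_div_iff₀ h2l h2k] at h0
    have h' : ((j:ℝ) - 1) < (i : ℝ) * 2 ^ m := by nlinarith
    have hcast : ((j - 1 : ℕ) : ℝ) < ((i * 2 ^ m : ℕ) : ℝ) := by
      push_cast [Nat.cast_sub hj]; exact h'
    have := Nat.cast_lt (α := ℝ).mp hcast
    omega
  apply Set.Icc_subset_Icc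
  · have hnat : (i - 1) * 2 ^ m ≤ j - 1 := by omega
    have hcast : ((i:ℝ) - 1) * 2 ^ m ≤ (j:ℝ) - 1 := by
      have : (((i - 1) * 2 ^ m : ℕ) : ℝ) ≤ ((j - 1 : ℕ) : ℝ) := by exact_mod_cast hnat
      push_cast [Nat.cast_sub hi, Nat.cast_sub hj] at this
      linarith
    rw [div_le_div_iff₀ h2k h2l]
    nlinarith
  · have hcast : (j : ℝ) ≤ (i:ℝ) * 2 ^ m := by exact_mod_cast key2
    rw [div_le_div_iff₀ h2l h2k]
    nlinarith

lemma dyadic_laminar {I J : Set ℝ} (hI : IsDyadicInterval I) (hJ : IsDyadicInterval J)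
    (h : (interior I ∩ interior J).Nonempty) : I ⊆ J ∨ J ⊆ I := by
  obtain ⟨k, i, hi1, hi2, rfl⟩ := hI
  obtain ⟨l, j, hj1, hj2, rfl⟩ := hJ
  obtain ⟨x, hx1, hx2⟩ := h
  rcases le_total k l with h' | h'
  · right; exact dIcc_subset_of_le hi1 hj1 h' hx1 hx2
  · left; exact dIcc_subset_of_le hj1 hi1 h' hx2 hx1


theorem stmt19 (n : ℕ) (hn : 1 ≤ n) (N : ℕ) (Part : Finset (Set (Fin n → ℝ)))
    (hcard : Part.card = N)
    (hblock : ∀ B ∈ Part, IsDyadicBlock B)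
    (hdisj : ∀ B ∈ Part, ∀ B' ∈ Part, B ≠ B' → interior B ∩ interior B' = ∅)
    (hcover : ⋃₀ (Part : Set (Set (Fin n → ℝ))) = Set.univ.pi fun _ => Set.Icc (0 : ℝ) 1) :
    ∃ P : Fin n → Finset (Set ℝ),
      (∀ i, DyadicPartition (P i)) ∧
      (∀ B ∈ Part, B = ⋃₀ {R : Set (Fin n → ℝ) | ∃ K : Fin n → Set ℝ,
        (∀ i, K i ∈ P i) ∧ R = Set.univ.pi K ∧ R ⊆ B}) ∧
      (∏ i, (P i).card) ≤ N ^ n := by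
  classical
  choose! F hF1 hF2 using hblock
  set S : Fin n → Finset (Set ℝ) := fun i => Part.image (fun B => F B i) with hS
  set P : Fin n → Finset (Set ℝ) :=
    fun i => (S i).filter (fun M => ∀ J ∈ S i, J ⊆ M → J = M) with hP
  have hSmem : ∀ i M, M ∈ S i ↔ ∃ B ∈ Part, F B i = M := by
    intro i M; simp [hS]
  have hSdy : ∀ i, ∀ M ∈ S i, IsDyadicInterval M := by
    intro i M hM
    obtain ⟨B, hB, rfl⟩ := (hSmem i M).mp hM
    exact hF1 B hB i
  have hPdef : ∀ i M, M ∈ P i ↔ M ∈ S i ∧ ∀ J ∈ S i, J ⊆ M → J = M := by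
    intro i M; simp [hP]
  have hPdy : ∀ i, ∀ M ∈ P i, IsDyadicInterval M := by
    intro i M hM; exact hSdy i M ((hPdef i M).mp hM).1
  -- membership in a block gives coordinatewise membership
  have hmemB : ∀ B ∈ Part, ∀ p : Fin n → ℝ, p ∈ B → ∀ j, p j ∈ F B j := by
    intro B hB p hp j
    rw [hF2 B hB] at hp
    exact hp j (Set.mem_univ j)
  -- interior of a block
  have hintB : ∀ B ∈ Part, interior B = Set.univ.pi (fun j => interior (F B j)) := by
    intro B hB
    conv_lhs => rw [hF2 B hB, interior_pi_set Set.finite_univ]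
  -- KEY LEMMA: irrational points are covered by minimal intervals inside any S-interval
  have key : ∀ (i : Fin n) (x : ℝ), Irrational x → ∀ M0 ∈ S i, x ∈ M0 →
      ∃ J ∈ P i, x ∈ J ∧ J ⊆ M0 := by
    intro i x hx M0 hM0 hxM0
    set T : Finset (Set ℝ) := (S i).filter (fun J => x ∈ J) with hT
    have hTmem : ∀ J, J ∈ T ↔ J ∈ S i ∧ x ∈ J := by intro J; simp [hT]
    obtain ⟨J, hJT, hJmin⟩ : ∃ J ∈ T, ∀ x ∈ T, ¬ x < J := by
      obtain ⟨J, hJ⟩ := T.exists_minimal ⟨M0, (hTmem M0).mpr ⟨hM0, hxM0⟩⟩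
      exact ⟨J, hJ.1, fun y hy hlt => hlt.not_ge (hJ.2 hy hlt.le)⟩
    obtain ⟨hJS, hxJ⟩ := (hTmem J).mp hJT
    have hJdy := hSdy i J hJS
    have hxintJ : x ∈ interior J := mem_interior_of_irrational hJdy hx hxJ
    have hJsubM0 : J ⊆ M0 := by
      rcases dyadic_laminar hJdy (hSdy i M0 hM0)
          ⟨x, hxintJ, mem_interior_of_irrational (hSdy i M0 hM0) hx hxM0⟩ with h | h
      · exact h
      · have hnot := hJmin M0 ((hTmem M0).mpr ⟨hM0, hxM0⟩)
        have heq : M0 = J := by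
          by_contra hne
          exact hnot (lt_of_le_of_ne h hne)
        rw [heq]
    refine ⟨J, ?_, hxJ, hJsubM0⟩
    rw [hPdef]
    refine ⟨hJS, ?_⟩
    intro Kset hKS hKJ
    by_contra hne
    have hKlt : Kset < J := lt_of_le_of_ne hKJ hne
    have hxK : x ∉ Kset := fun hxK => hJmin Kset ((hTmem Kset).mpr ⟨hKS, hxK⟩) hKlt
    obtain ⟨B', hB', hFB'⟩ := (hSmem i Kset).mp hKS
    have hqex : ∀ j : Fin n, ∃ q : ℝ, Irrational q ∧ q ∈ interior (F B' j) :=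
      fun j => exists_irrational_mem_interior (hF1 B' hB' j)
    choose q hq1 hq2 using hqex
    set p : Fin n → ℝ := Function.update q i x with hp
    have hpcube : p ∈ Set.univ.pi (fun _ : Fin n => Set.Icc (0:ℝ) 1) := by
      intro j _
      by_cases hji : j = i
      · subst hji
        simp only [hp, Function.update_self]
        exact hJdy.subset_unit hxJ
      · simp only [hp, Function.update_of_ne hji]
        exact (hF1 B' hB' j).subset_unit (interior_subset (hq2 j))
    rw [← hcover] at hpcube
    obtain ⟨B'', hB''0, hpB''⟩ := hpcube
    have hB'' : B'' ∈ Part := hB''0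
    have hxB'' : x ∈ F B'' i := by
      have h0 := hmemB B'' hB'' p hpB'' i
      simpa [hp, Function.update_self] using h0
    have hB''dy := hF1 B'' hB'' i
    have hJsubB'' : J ⊆ F B'' i := by
      rcases dyadic_laminar hB''dy hJdy
          ⟨x, mem_interior_of_irrational hB''dy hx hxB'', hxintJ⟩ with h | h
      · have hmem : F B'' i ∈ T := (hTmem _).mpr ⟨(hSmem i _).mpr ⟨B'', hB'', rfl⟩, hxB''⟩
        have heq : F B'' i = J := by
          by_contra hne'
          exact hJmin _ hmem (lt_of_le_of_ne h hne')
        rw [heq]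
      · exact h
    obtain ⟨y, hy1, hy2⟩ := exists_irrational_mem_interior (hSdy i Kset hKS)
    set r : Fin n → ℝ := Function.update q i y with hr
    have hrB' : r ∈ interior B' := by
      rw [hintB B' hB']
      intro j _
      by_cases hji : j = i
      · subst hji
        simp only [hr, Function.update_self]
        rw [hFB']; exact hy2
      · simp only [hr, Function.update_of_ne hji]
        exact hq2 j
    have hrB'' : r ∈ interior B'' := by
      rw [hintB B'' hB'']
      intro j _
      by_cases hji : j = i
      · subst hji
        simp only [hr, Function.update_self]
        exact interior_mono (hKJ.trans hJsubB'') hy2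
      · simp only [hr, Function.update_of_ne hji]
        have hqj : q j ∈ F B'' j := by
          have h0 := hmemB B'' hB'' p hpB'' j
          simpa [hp, Function.update_of_ne hji] using h0
        exact mem_interior_of_irrational (hF1 B'' hB'' j) (hq1 j) hqj
    have hBeq : B' = B'' := by
      by_contra hne'
      have h0 : r ∈ interior B' ∩ interior B'' := ⟨hrB', hrB''⟩
      rw [hdisj B' hB' B'' hB'' hne'] at h0
      exact h0
    exact hxK (by rw [← hFB', hBeq]; exact hxB'')
  -- covering lemma by closure
  have cover : ∀ (i : Fin n), ∀ M0 ∈ S i, M0 ⊆ ⋃₀ {J : Set ℝ | J ∈ P i ∧ J ⊆ M0} := by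
    intro i M0 hM0
    set C := ⋃₀ {J : Set ℝ | J ∈ P i ∧ J ⊆ M0} with hC
    have hCclosed : IsClosed C := by
      rw [hC, Set.sUnion_eq_biUnion]
      apply Set.Finite.isClosed_biUnion
      · exact (P i).finite_toSet.subset (fun J hJ => hJ.1)
      · intro J hJ; exact (hPdy i J hJ.1).isClosed
    obtain ⟨k, m, hm1, hm2, hM0eq⟩ := hSdy i M0 hM0
    have hlt : ((m:ℝ) - 1)/2^k < (m:ℝ)/2^k := dIcc_lt'
    have hsub1 : Set.Ioo (((m:ℝ)-1)/2^k) ((m:ℝ)/2^k) ∩ {y : ℝ | Irrational y} ⊆ C := by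
      rintro y ⟨hy1, hy2⟩
      have hyM0 : y ∈ M0 := by rw [hM0eq]; exact Set.Ioo_subset_Icc_self hy1
      obtain ⟨J, hJ, hyJ, hJsub⟩ := key i y hy2 M0 hM0 hyM0
      exact ⟨J, ⟨hJ, hJsub⟩, hyJ⟩
    calc M0 = closure (Set.Ioo (((m:ℝ)-1)/2^k) ((m:ℝ)/2^k)) := by
              rw [closure_Ioo (ne_of_lt hlt), hM0eq]; rfl
      _ ⊆ closure (closure (Set.Ioo (((m:ℝ)-1)/2^k) ((m:ℝ)/2^k) ∩ {y : ℝ | Irrational y})) :=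
            closure_mono (dense_irrational.open_subset_closure_inter isOpen_Ioo)
      _ = closure (Set.Ioo (((m:ℝ)-1)/2^k) ((m:ℝ)/2^k) ∩ {y : ℝ | Irrational y}) :=
            closure_closure
      _ ⊆ C := hCclosed.closure_subset_iff.mpr hsub1
  refine ⟨P, ?_, ?_, ?_⟩
  · intro i
    refine ⟨hPdy i, ?_, ?_⟩
    · intro I hI J hJ hne
      by_contra hne2
      have hnonempty : (interior I ∩ interior J).Nonempty := Set.nonempty_iff_ne_empty.mpr hne2
      rcases dyadic_laminar (hPdy i I hI) (hPdy i J hJ) hnonempty with h | h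
      · exact hne (((hPdef i J).mp hJ).2 I ((hPdef i I).mp hI).1 h)
      · exact hne (((hPdef i I).mp hI).2 J ((hPdef i J).mp hJ).1 h).symm
    · apply Set.Subset.antisymm
      · intro x hx
        obtain ⟨J, hJ, hxJ⟩ := hx
        exact (hPdy i J hJ).subset_unit hxJ
      · intro x hx
        set p : Fin n → ℝ := fun j => if j = i then x else 0 with hp
        have hpcube : p ∈ Set.univ.pi (fun _ : Fin n => Set.Icc (0:ℝ) 1) := by
          intro j _
          by_cases hji : j = i
          · simpa [hp, hji] using hx
          · simp [hp, hji]
        rw [← hcover] at hpcube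
        obtain ⟨B, hB0, hpB⟩ := hpcube
        have hB : B ∈ Part := hB0
        have hxS : x ∈ F B i := by
          have h0 := hmemB B hB p hpB i
          simpa [hp] using h0
        have hFS : F B i ∈ S i := (hSmem i _).mpr ⟨B, hB, rfl⟩
        obtain ⟨J, ⟨hJP, _⟩, hxJ⟩ := cover i (F B i) hFS hxS
        exact ⟨J, hJP, hxJ⟩
  · intro B hB
    apply Set.Subset.antisymm
    · intro p hp
      have hpm : ∀ j, p j ∈ F B j := hmemB B hB p hp
      have hexists : ∀ j : Fin n, ∃ J, (J ∈ P j ∧ J ⊆ F B j) ∧ p j ∈ J := by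
        intro j
        have hFS : F B j ∈ S j := (hSmem j _).mpr ⟨B, hB, rfl⟩
        obtain ⟨J, hJ, hpJ⟩ := cover j (F B j) hFS (hpm j)
        exact ⟨J, hJ, hpJ⟩
      choose Kf hKf hpKf using hexists
      refine ⟨Set.univ.pi Kf, ⟨Kf, fun j => (hKf j).1, rfl, ?_⟩, fun j _ => hpKf j⟩
      rw [hF2 B hB]
      exact Set.pi_mono (fun j _ => (hKf j).2)
    · intro p hp
      obtain ⟨R, ⟨Kf, hKf, rfl, hsub⟩, hpR⟩ := hp
      exact hsub hpR
  · have h1 : ∀ i : Fin n, (P i).card ≤ N := by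
      intro i
      calc (P i).card ≤ (S i).card := Finset.card_filter_le _ _
        _ ≤ Part.card := Finset.card_image_le
        _ = N := hcard
    calc ∏ i, (P i).card ≤ ∏ _i : Fin n, N := Finset.prod_le_prod' (fun i _ => h1 i)
      _ = N ^ n := by simp
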